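/- If A ∈ ℝ^{n×n} is a symmetric circulant matrix with first column a, then Ȟ⁺·A·Ȟ⁺ = Ȟ⁻·A·Ȟ⁻ = Λ, where Λ is the diagonal matrix Λ = √n·Diag(Ȟ_c·a); moreover √n·Ȟ⁺·a = √n·Ȟ⁻·a = √n·Ȟ_c·a, so all three formulas for the diagonal agree. -/

import Mathlib

open Matrix Real

/-- The node-centered cosine matrix `(Ȟ_c)_{j,k} = n^{−1/2}·cos(2jkπ/n)`. -/
noncomputable def Hc (n : ℕ) : Matrix (Fin n) (Fin n) ℝ :=
  fun j k => Real.cos (2 * (j.val : ℝ) * (k.val : ℝ) * Real.pi / n) / Real.sqrt n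

/-- The node-centered sine matrix `(Ȟ_s)_{j,k} = n^{−1/2}·sin(2jkπ/n)`. -/
noncomputable def Hs (n : ℕ) : Matrix (Fin n) (Fin n) ℝ :=
  fun j k => Real.sin (2 * (j.val : ℝ) * (k.val : ℝ) * Real.pi / n) / Real.sqrt n

/-- The node-centered Hartley matrix `Ȟ⁺ = Ȟ_c + Ȟ_s`. -/
noncomputable def Hp (n : ℕ) : Matrix (Fin n) (Fin n) ℝ := Hc n + Hs n

/-- The node-centered Hartley matrix `Ȟ⁻ = Ȟ_c − Ȟ_s`. -/
noncomputable def Hm (n : ℕ) : Matrix (Fin n) (Fin n) ℝ := Hc n - Hs n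

/-! The rows of `Ȟ_c` and `Ȟ_s` are `cos` and `sin` of the characters `θ_j : k ↦ 2πjk/n` of
`ℤ/n`. Convolving with `a` translates these, so `A Ȟ_c = Ȟ_c Λ + Ȟ_s M` and
`A Ȟ_s = Ȟ_s Λ - Ȟ_c M` with `Λ = √n Diag(Ȟ_c a)`, `M = √n Diag(Ȟ_s a)`; evenness of `a` gives
`Ȟ_s a = 0`, hence `M = 0` and `A Ȟ^± = Ȟ^± Λ`. Orthogonality of characters gives
`Ȟ_c² + Ȟ_s² = 1` and `Ȟ_c Ȟ_s + Ȟ_s Ȟ_c = 0`, so `Ȟ^± Ȟ^± = 1` and `Ȟ^± A Ȟ^± = Λ`. -/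

open Finset

namespace Real.Angle

theorem cos_sub (θ ψ : Angle) : cos (θ - ψ) = cos θ * cos ψ + sin θ * sin ψ := by
  rw [sub_eq_add_neg, cos_add, cos_neg, sin_neg]
  ring

theorem sin_sub (θ ψ : Angle) : sin (θ - ψ) = sin θ * cos ψ - cos θ * sin ψ := by
  rw [sub_eq_add_neg, sin_add, cos_neg, sin_neg]
  ring

theorem cos_ne_one {θ : Angle} (hθ : θ ≠ 0) : cos θ ≠ 1 := by
  rw [← cos_zero, Ne, cos_eq_iff_eq_or_eq_neg, neg_zero, or_self]
  exact hθ

end Real.Angle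

section CharacterSums

variable {G : Type*} [AddCommGroup G] [Fintype G] (θ : G →+ Real.Angle)

theorem sum_mul_cos_map_sub (a : G → ℝ) (k : G) :
    ∑ m, a (k - m) * (θ m).cos =
      (θ k).cos * ∑ t, a t * (θ t).cos + (θ k).sin * ∑ t, a t * (θ t).sin := by
  rw [← (Equiv.subLeft k).sum_comp, mul_sum, mul_sum, ← sum_add_distrib]
  refine sum_congr rfl fun t _ => ?_
  rw [Equiv.subLeft_apply, sub_sub_cancel, map_sub, Real.Angle.cos_sub]
  ring

theorem sum_mul_sin_map_sub (a : G → ℝ) (k : G) :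
    ∑ m, a (k - m) * (θ m).sin =
      (θ k).sin * ∑ t, a t * (θ t).cos - (θ k).cos * ∑ t, a t * (θ t).sin := by
  rw [← (Equiv.subLeft k).sum_comp, mul_sum, mul_sum, ← sum_sub_distrib]
  refine sum_congr rfl fun t _ => ?_
  rw [Equiv.subLeft_apply, sub_sub_cancel, map_sub, Real.Angle.sin_sub]
  ring

theorem sum_mul_sin_eq_zero {a : G → ℝ} (ha : ∀ t, a (-t) = a t) :
    ∑ t, a t * (θ t).sin = 0 := by
  have h := Equiv.sum_comp (Equiv.neg G) fun t => a t * (θ t).sin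
  simp only [Equiv.neg_apply, ha, map_neg, Real.Angle.sin_neg, mul_neg, sum_neg_distrib] at h
  linarith

theorem sum_sin_eq_zero : ∑ t, (θ t).sin = 0 := by
  simpa using sum_mul_sin_eq_zero θ (a := 1) fun _ => rfl

theorem sum_cos_eq_zero (hθ : θ ≠ 0) : ∑ t, (θ t).cos = 0 := by
  obtain ⟨k, hk⟩ : ∃ k, θ k ≠ 0 := by
    by_contra! h
    exact hθ (AddMonoidHom.ext h)
  -- translating by `k` multiplies the sum by `cos (θ k) ≠ 1`
  have hshift := sum_mul_cos_map_sub θ 1 k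
  simp only [Pi.one_apply, one_mul, sum_sin_eq_zero, mul_zero, add_zero] at hshift
  have hcos : 1 - (θ k).cos ≠ 0 := sub_ne_zero.mpr (Real.Angle.cos_ne_one hk).symm
  have hprod : (1 - (θ k).cos) * ∑ t, (θ t).cos = 0 := by linear_combination hshift
  exact (mul_eq_zero.mp hprod).resolve_left hcos

end CharacterSums

section Hartley

theorem coe_two_mul_mul_mul_pi_div (n j k : ℕ) :
    ((2 * j * k * π / n : ℝ) : Real.Angle) = k • ((2 * j * π / n : ℝ) : Real.Angle) := by
  rw [← Real.Angle.natCast_mul_eq_nsmul]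
  ring_nf

variable {n : ℕ} [NeZero n]

theorem nsmul_coe_two_mul_pi_div (j : ℕ) :
    n • ((2 * j * π / n : ℝ) : Real.Angle) = 0 := by
  have hn : (n : ℝ) ≠ 0 := Nat.cast_ne_zero.mpr (NeZero.ne n)
  rw [← Real.Angle.natCast_mul_eq_nsmul,
    show (n : ℝ) * (2 * j * π / n) = j * (2 * π) by field_simp,
    Real.Angle.natCast_mul_eq_nsmul, Real.Angle.coe_two_pi, nsmul_zero]

variable (n) in
noncomputable def hartleyAngle (j : Fin n) : Fin n →+ Real.Angle :=
  AddMonoidHom.mk' (fun k => ((2 * j * k * π / n : ℝ) : Real.Angle)) fun k l => by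
    simp only [coe_two_mul_mul_mul_pi_div, Fin.val_add, ← add_nsmul]
    exact (nsmul_eq_mod_nsmul _ (nsmul_coe_two_mul_pi_div _)).symm

theorem hartleyAngle_apply (j k : Fin n) :
    hartleyAngle n j k = ((2 * j * k * π / n : ℝ) : Real.Angle) := rfl

theorem hartleyAngle_comm (j k : Fin n) : hartleyAngle n j k = hartleyAngle n k j := by
  rw [hartleyAngle_apply, hartleyAngle_apply, mul_right_comm _ (k : ℝ) (j : ℝ)]

theorem Hc_apply (j k : Fin n) : Hc n j k = (hartleyAngle n j k).cos / √n := by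
  rw [hartleyAngle_apply, Real.Angle.cos_coe, Hc]

theorem Hs_apply (j k : Fin n) : Hs n j k = (hartleyAngle n j k).sin / √n := by
  rw [hartleyAngle_apply, Real.Angle.sin_coe, Hs]

theorem hartleyAngle_injective : Function.Injective (hartleyAngle n) := by
  intro j l h
  obtain hn | hn := (Nat.one_le_iff_ne_zero.mpr (NeZero.ne n)).eq_or_lt
  · subst hn
    exact Subsingleton.elim j l
  have h1 := DFunLike.congr_fun h 1
  rw [hartleyAngle_apply, hartleyAngle_apply, Fin.val_one', Nat.mod_eq_of_lt hn,
    Real.Angle.angle_eq_iff_two_pi_dvd_sub] at h1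
  obtain ⟨z, hz⟩ := h1
  have hdvd : (n : ℤ) ∣ (j : ℤ) - l := by
    refine ⟨z, ?_⟩
    have : ((j : ℝ) - l) = n * z := by
      field_simp at hz
      simpa using hz
    exact_mod_cast this
  have := Int.eq_zero_of_abs_lt_dvd hdvd (by rw [abs_lt]; omega)
  exact Fin.ext (by omega)

theorem Hc_mulVec_apply (a : Fin n → ℝ) (j : Fin n) :
    (Hc n *ᵥ a) j = (∑ t, a t * (hartleyAngle n j t).cos) / √n := by
  simp only [mulVec, dotProduct, Hc_apply, sum_div]
  exact sum_congr rfl fun t _ => by ring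

theorem Hs_mulVec_apply (a : Fin n → ℝ) (j : Fin n) :
    (Hs n *ᵥ a) j = (∑ t, a t * (hartleyAngle n j t).sin) / √n := by
  simp only [mulVec, dotProduct, Hs_apply, sum_div]
  exact sum_congr rfl fun t _ => by ring

theorem Hs_mulVec_eq_zero {a : Fin n → ℝ} (ha : ∀ i, a (-i) = a i) : Hs n *ᵥ a = 0 := by
  ext j
  rw [Hs_mulVec_apply, sum_mul_sin_eq_zero _ ha, zero_div, Pi.zero_apply]

theorem circulant_mul_Hc (a : Fin n → ℝ) :
    circulant a * Hc n =
      Hc n * diagonal (√n • Hc n *ᵥ a) + Hs n * diagonal (√n • Hs n *ᵥ a) := by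
  have hn : √(n : ℝ) ≠ 0 := Real.sqrt_ne_zero'.mpr (Nat.cast_pos.mpr (NeZero.pos n))
  ext k j
  have hcol : ∀ m, Hc n m j = (hartleyAngle n j m).cos / √n := fun m => by
    rw [Hc_apply, hartleyAngle_comm]
  rw [Matrix.add_apply, mul_diagonal, mul_diagonal, mul_apply]
  simp only [circulant_apply, hcol, Hs_apply, hartleyAngle_comm k j, Pi.smul_apply, smul_eq_mul,
    Hc_mulVec_apply, Hs_mulVec_apply, mul_div_cancel₀ _ hn, ← mul_div_assoc, ← sum_div,
    sum_mul_cos_map_sub]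
  ring

theorem circulant_mul_Hs (a : Fin n → ℝ) :
    circulant a * Hs n =
      Hs n * diagonal (√n • Hc n *ᵥ a) - Hc n * diagonal (√n • Hs n *ᵥ a) := by
  have hn : √(n : ℝ) ≠ 0 := Real.sqrt_ne_zero'.mpr (Nat.cast_pos.mpr (NeZero.pos n))
  ext k j
  have hcol : ∀ m, Hs n m j = (hartleyAngle n j m).sin / √n := fun m => by
    rw [Hs_apply, hartleyAngle_comm]
  rw [Matrix.sub_apply, mul_diagonal, mul_diagonal, mul_apply]
  simp only [circulant_apply, hcol, Hc_apply, hartleyAngle_comm k j, Pi.smul_apply, smul_eq_mul,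
    Hc_mulVec_apply, Hs_mulVec_apply, mul_div_cancel₀ _ hn, ← mul_div_assoc, ← sum_div,
    sum_mul_sin_map_sub]
  ring

theorem Hc_mul_self_add_Hs_mul_self : Hc n * Hc n + Hs n * Hs n = 1 := by
  have hn : √(n : ℝ) * √n = n := Real.mul_self_sqrt (Nat.cast_nonneg n)
  ext j l
  have hterm : ∀ k, Hc n j k * Hc n k l + Hs n j k * Hs n k l =
      ((hartleyAngle n j - hartleyAngle n l) k).cos / n := fun k => by
    rw [Hc_apply, Hc_apply, Hs_apply, Hs_apply, hartleyAngle_comm k l, AddMonoidHom.sub_apply,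
      Real.Angle.cos_sub, div_mul_div_comm, div_mul_div_comm, hn, add_div]
  rw [Matrix.add_apply, mul_apply, mul_apply, ← sum_add_distrib, sum_congr rfl fun k _ => hterm k,
    ← sum_div, one_apply]
  split_ifs with h
  · subst h
    simp [NeZero.ne n]
  · rw [sum_cos_eq_zero _ (sub_ne_zero.mpr (hartleyAngle_injective.ne h)), zero_div]

theorem Hc_mul_Hs_add_Hs_mul_Hc : Hc n * Hs n + Hs n * Hc n = 0 := by
  have hn : √(n : ℝ) * √n = n := Real.mul_self_sqrt (Nat.cast_nonneg n)
  ext j l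
  have hterm : ∀ k, Hc n j k * Hs n k l + Hs n j k * Hc n k l =
      ((hartleyAngle n j + hartleyAngle n l) k).sin / n := fun k => by
    rw [Hc_apply, Hc_apply, Hs_apply, Hs_apply, hartleyAngle_comm k l, AddMonoidHom.add_apply,
      Real.Angle.sin_add, div_mul_div_comm, div_mul_div_comm, hn, add_div, add_comm]
  rw [Matrix.add_apply, mul_apply, mul_apply, ← sum_add_distrib, sum_congr rfl fun k _ => hterm k,
    ← sum_div, sum_sin_eq_zero, zero_div, Matrix.zero_apply]

theorem Hp_mul_self : Hp n * Hp n = 1 := by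
  calc Hp n * Hp n = (Hc n * Hc n + Hs n * Hs n) + (Hc n * Hs n + Hs n * Hc n) := by
        simp only [Hp, add_mul, mul_add]
        abel
    _ = 1 := by rw [Hc_mul_self_add_Hs_mul_self, Hc_mul_Hs_add_Hs_mul_Hc, add_zero]

theorem Hm_mul_self : Hm n * Hm n = 1 := by
  calc Hm n * Hm n = (Hc n * Hc n + Hs n * Hs n) - (Hc n * Hs n + Hs n * Hc n) := by
        simp only [Hm, sub_mul, mul_sub]
        abel
    _ = 1 := by rw [Hc_mul_self_add_Hs_mul_self, Hc_mul_Hs_add_Hs_mul_Hc, sub_zero]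

end Hartley

/-- For a symmetric circulant `A` with first column `a`:
`Ȟ⁺·A·Ȟ⁺ = Ȟ⁻·A·Ȟ⁻ = Λ` with `Λ = √n·Diag(Ȟ_c·a)`; moreover
`√n·Ȟ⁺·a = √n·Ȟ⁻·a = √n·Ȟ_c·a`. -/
theorem symm_circulant_diag_node_hartley (n : ℕ) [NeZero n] (a : Fin n → ℝ)
    (A : Matrix (Fin n) (Fin n) ℝ)
    (hA : ∀ j k : Fin n, A j k = a (j - k))
    (ha : ∀ i : Fin n, a (-i) = a i) :
    Hp n * A * Hp n = Real.sqrt n • Matrix.diagonal ((Hc n).mulVec a) ∧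
    Hm n * A * Hm n = Real.sqrt n • Matrix.diagonal ((Hc n).mulVec a) ∧
    Real.sqrt n • (Hp n).mulVec a = Real.sqrt n • (Hc n).mulVec a ∧
    Real.sqrt n • (Hm n).mulVec a = Real.sqrt n • (Hc n).mulVec a := by
  obtain rfl : A = circulant a := Matrix.ext hA
  have hs : Hs n *ᵥ a = 0 := Hs_mulVec_eq_zero ha
  set Λ := √n • diagonal (Hc n *ᵥ a)
  have hC : circulant a * Hc n = Hc n * Λ := by
    rw [circulant_mul_Hc, hs, smul_zero, diagonal_zero', mul_zero, add_zero, diagonal_smul]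
  have hS : circulant a * Hs n = Hs n * Λ := by
    rw [circulant_mul_Hs, hs, smul_zero, diagonal_zero', mul_zero, sub_zero, diagonal_smul]
  refine ⟨?_, ?_, ?_, ?_⟩
  · rw [mul_assoc, Hp, mul_add, hC, hS, ← add_mul, ← Hp, ← mul_assoc, Hp_mul_self, one_mul]
  · rw [mul_assoc, Hm, mul_sub, hC, hS, ← sub_mul, ← Hm, ← mul_assoc, Hm_mul_self, one_mul]
  · rw [Hp, add_mulVec, hs, add_zero]
  · rw [Hm, sub_mulVec, hs, sub_zero]
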